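/- Let ℝ act continuously on a compact metric space X, T > 0, and p ∈ X. Then the local mean dimension satisfies dim_p(X : TZ) = T · dim_p(X : ℝ). -/

import Mathlib

open Metric Filter Set
open scoped ENNReal

noncomputable section

/-- The diameter of a set with respect to an abstract distance function `d`. -/
def setDiam {X : Type*} (d : X → X → ℝ) (s : Set X) : ℝ :=
  sSup (insert 0 {r : ℝ | ∃ x ∈ s, ∃ y ∈ s, d x y = r})

/-- `P ⊆ ℝ^m` is a (finite) polyhedron of dimension at most `n`: a finite union of
simplices (convex hulls of affinely independent finite sets) each with at most `n+1` vertices. -/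
def IsPolyhedronOfDim {m : ℕ} (n : ℕ) (P : Set (EuclideanSpace ℝ (Fin m))) : Prop :=
  ∃ S : Finset (Finset (EuclideanSpace ℝ (Fin m))),
    (∀ s ∈ S, AffineIndependent ℝ (fun v : {x // x ∈ s} => (v : EuclideanSpace ℝ (Fin m))) ∧
      s.card ≤ n + 1) ∧
    P = ⋃ s ∈ S, convexHull ℝ (s : Set (EuclideanSpace ℝ (Fin m)))

/-- `Widim_ε(X, d)`: the minimal integer `n ≥ 0` such that there exist an `n`-dimensional
polyhedron `P` and a continuous map `f : X → P` all of whose fibers have `d`-diameter `≤ ε`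
(an `ε`-embedding). -/
def widim (X : Type*) [TopologicalSpace X] (d : X → X → ℝ) (ε : ℝ) : ℕ :=
  sInf {n : ℕ | ∃ (m : ℕ) (P : Set (EuclideanSpace ℝ (Fin m))) (f : X → P),
    IsPolyhedronOfDim n P ∧ Continuous f ∧ ∀ y : P, setDiam d (f ⁻¹' {y}) ≤ ε}

/-- For a right action `act` of `Γ` on `X` and `Ω ⊆ Γ`, the distance
`d_Ω(x,y) = sup_{γ ∈ Ω} d(x·γ, y·γ)`. -/
def dOmega {X Γ : Type*} (d : X → X → ℝ) (act : X → Γ → X) (Ω : Set Γ) (x y : X) : ℝ :=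
  sSup ((fun γ => d (act x γ) (act y γ)) '' Ω)
/-- The local mean dimension `dim_p(X : ℝ)` of a continuous `ℝ`-action at `p`:
`lim_{r→0} dim(B_r(p)_ℝ ⊂ X : ℝ)`, where
`dim(Y ⊂ X : ℝ) = lim_{ε→0} lim_n (sup_{s∈ℝ} Widim_ε(Y, d_{s+[0,n]}))/n`, written with
the limit in `n` as a `limsup`, the (monotone) limit in `ε` as a supremum and the
(monotone) limit in `r` as an infimum. -/
def localDimR {X : Type*} [MetricSpace X] (act : X → ℝ → X) (p : X) : ℝ≥0∞ :=
  ⨅ r > (0 : ℝ), ⨆ ε > (0 : ℝ), Filter.limsup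
    (fun n : ℕ =>
      (⨆ s : ℝ, (widim {x : X | ∀ t : ℝ, dist (act x t) (act p t) ≤ r}
        (fun u v => dOmega dist act (Set.Icc s (s + (n : ℝ))) (u : X) (v : X)) ε : ℝ≥0∞))
      / (n : ℝ≥0∞))
    Filter.atTop

/-- The local mean dimension `dim_p(X : Tℤ)` of the induced `Tℤ`-action at `p`, along the
amenable sequence `Ω'_n = {0, T, …, (n-1)T}` and its translates `kT + Ω'_n`. -/
def localDimTZ {X : Type*} [MetricSpace X] (act : X → ℝ → X) (T : ℝ) (p : X) : ℝ≥0∞ :=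
  ⨅ r > (0 : ℝ), ⨆ ε > (0 : ℝ), Filter.limsup
    (fun n : ℕ =>
      (⨆ k : ℤ, (widim {x : X | ∀ j : ℤ, dist (act x ((j : ℝ) * T)) (act p ((j : ℝ) * T)) ≤ r}
        (fun u v => dOmega dist act
          {t : ℝ | ∃ m : ℕ, m < n ∧ t = (k : ℝ) * T + (m : ℝ) * T} (u : X) (v : X)) ε : ℝ≥0∞))
      / (n : ℝ≥0∞))
    Filter.atTop

open scoped Topology

/-!
Uniform continuity of the flow on `X × [0, T]` turns closeness at the grid times `jT` into
closeness at all times. Hence small `Tℤ`-Bowen balls lie in small `ℝ`-Bowen balls, and the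
metric `d_{[s, s + n]}` is controlled by `d` on the `⌈n / T⌉ + 1` grid points from `⌊s / T⌋ T`
on; conversely, `d` on the `n` grid points from `kT` on is dominated by `d_{[kT, kT + ⌈nT⌉]}`.
`Widim` is monotone under such comparisons, and since `n` grid points span a time of about `nT`,
the normalised widths of the two actions agree up to the factor `T`.
-/

section Widim

lemma setDiam_le {Z : Type*} {d : Z → Z → ℝ} {s : Set Z} {ε : ℝ} (hε : 0 ≤ ε)
    (h : ∀ x ∈ s, ∀ y ∈ s, d x y ≤ ε) : setDiam d s ≤ ε := by
  refine Real.sSup_le ?_ hε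
  rintro r (rfl | ⟨x, hx, y, hy, rfl⟩)
  exacts [hε, h x hx y hy]

lemma le_setDiam {Z : Type*} {d : Z → Z → ℝ} {s : Set Z} {C : ℝ} (hC : ∀ x y, d x y ≤ C)
    {x y : Z} (hx : x ∈ s) (hy : y ∈ s) : d x y ≤ setDiam d s := by
  refine le_csSup ⟨max C 0, ?_⟩ (Or.inr ⟨x, hx, y, hy, rfl⟩)
  rintro r (rfl | ⟨a, -, b, -, rfl⟩)
  exacts [le_max_right _ _, (hC a b).trans (le_max_left _ _)]

def widimSet (X : Type*) [TopologicalSpace X] (d : X → X → ℝ) (ε : ℝ) : Set ℕ :=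
  {n : ℕ | ∃ (m : ℕ) (P : Set (EuclideanSpace ℝ (Fin m))) (f : X → P),
    IsPolyhedronOfDim n P ∧ Continuous f ∧ ∀ y : P, setDiam d (f ⁻¹' {y}) ≤ ε}

lemma widim_le_widim_of_continuous {Y Z : Type*} [TopologicalSpace Y] [TopologicalSpace Z]
    {g : Y → Z} (hg : Continuous g) {d : Y → Y → ℝ} {d' : Z → Z → ℝ} {ε ε' C : ℝ}
    (hε : 0 ≤ ε) (hC : ∀ u v, d' u v ≤ C) (hdd' : ∀ u v, d' (g u) (g v) ≤ ε' → d u v ≤ ε)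
    (hne : (widimSet Z d' ε').Nonempty) :
    widim Y d ε ≤ widim Z d' ε' := by
  -- `widim Z d' ε'` is the junk value `sInf ∅ = 0` when `Z` has no `ε'`-embedding
  obtain ⟨m, P, f, hP, hf, hfib⟩ := Nat.sInf_mem hne
  refine Nat.sInf_le ⟨m, P, f ∘ g, hP, hf.comp hg, fun y => setDiam_le hε ?_⟩
  intro u hu v hv
  exact hdd' u v ((le_setDiam hC hu hv).trans (hfib y))

def stdSimplexEuclidean (m : ℕ) : Set (EuclideanSpace ℝ (Fin m)) :=
  convexHull ℝ (Set.range (EuclideanSpace.basisFun (Fin m) ℝ))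

lemma isPolyhedronOfDim_stdSimplexEuclidean (m : ℕ) :
    IsPolyhedronOfDim m (stdSimplexEuclidean m) := by
  classical
  let b := EuclideanSpace.basisFun (Fin m) ℝ
  refine ⟨{Finset.univ.image b}, ?_, by
    simp only [Finset.mem_singleton, Set.iUnion_iUnion_eq_left, Finset.coe_image, Finset.coe_univ,
      Set.image_univ, stdSimplexEuclidean, b]⟩
  intro s hs
  rw [Finset.mem_singleton] at hs
  subst hs
  refine ⟨?_, Finset.card_image_le.trans (by simp)⟩
  have hb : AffineIndependent ℝ ((↑) : Set.range b → EuclideanSpace ℝ (Fin m)) :=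
    b.toBasis.linearIndependent.affineIndependent.range
  exact hb.mono (by simp)

lemma exists_continuous_stdSimplexEuclidean_dist_lt (Y : Type*) [MetricSpace Y] [CompactSpace Y]
    {η : ℝ} (hη : 0 < η) :
    ∃ (m : ℕ) (F : Y → stdSimplexEuclidean m),
      Continuous F ∧ ∀ u v, F u = F v → dist u v < η := by
  obtain ⟨t, -, htf, hcover⟩ :=
    finite_cover_balls_of_compact (isCompact_univ (X := Y)) (half_pos hη)
  have := htf.to_subtype
  obtain ⟨m, ⟨e⟩⟩ := Finite.exists_equiv_fin t
  let c : Fin m → Y := fun i => e.symm i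
  have hU : Set.univ ⊆ ⋃ i, ball (c i) (η / 2) := by
    intro x hx
    obtain ⟨y, hy, hxy⟩ := Set.mem_iUnion₂.1 (hcover hx)
    exact Set.mem_iUnion.2 ⟨e ⟨y, hy⟩, by simpa [c] using hxy⟩
  obtain ⟨ρ, hρ⟩ := PartitionOfUnity.exists_isSubordinate isClosed_univ _ (fun _ => isOpen_ball) hU
  let b := (EuclideanSpace.basisFun (Fin m) ℝ).toBasis
  let F : Y → EuclideanSpace ℝ (Fin m) := fun x => b.equivFun.symm fun i => ρ i x
  have hF : ∀ x, F x = ∑ i, ρ i x • b i := fun x => b.equivFun_symm_apply _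
  have hFmem : ∀ x, F x ∈ stdSimplexEuclidean m := by
    intro x
    rw [hF]
    refine (convex_convexHull ℝ _).sum_mem (fun i _ => ρ.nonneg i x) ?_
      (fun i _ => subset_convexHull ℝ _ (by simp [b]))
    rw [← finsum_eq_sum_of_fintype]
    exact ρ.sum_eq_one (Set.mem_univ x)
  refine ⟨m, fun x => ⟨F x, hFmem x⟩, ?_, fun u v huv => ?_⟩
  · refine Continuous.subtype_mk ?_ _
    rw [show F = fun x => ∑ i, ρ i x • b i from funext hF]
    fun_prop
  · have hρuv : ∀ i, ρ i u = ρ i v :=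
      congrFun (b.equivFun.symm.injective (congrArg Subtype.val huv))
    obtain ⟨i, hi⟩ := ρ.exists_pos (Set.mem_univ u)
    have hmem : ∀ x, ρ i x ≠ 0 → dist x (c i) < η / 2 := fun x hx =>
      hρ i (subset_tsupport _ hx)
    have hu := hmem u hi.ne'
    have hv := hmem v (hρuv i ▸ hi.ne')
    linarith [dist_triangle_right u v (c i)]

lemma widimSet_nonempty {Y : Type*} [MetricSpace Y] [CompactSpace Y] {d : Y → Y → ℝ} {ε η : ℝ}
    (hε : 0 ≤ ε) (hη : 0 < η) (hd : ∀ u v, dist u v < η → d u v ≤ ε) :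
    (widimSet Y d ε).Nonempty := by
  obtain ⟨m, F, hF, hFdist⟩ := exists_continuous_stdSimplexEuclidean_dist_lt Y hη
  exact ⟨m, m, _, F, isPolyhedronOfDim_stdSimplexEuclidean m, hF, fun y =>
    setDiam_le hε fun u hu v hv => hd u v (hFdist u v (hu.trans hv.symm))⟩

end Widim

section Dynamics

variable {X Γ : Type*} [MetricSpace X] (act : X → Γ → X)

def dynBall (p : X) (r : ℝ) : Set X :=
  {x | ∀ γ, dist (act x γ) (act p γ) ≤ r}

lemma isClosed_dynBall (hact : ∀ γ, Continuous fun x => act x γ) (p : X) (r : ℝ) :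
    IsClosed (dynBall act p r) := by
  simp only [dynBall, Set.ofPred_forall]
  exact isClosed_iInter fun γ => isClosed_le ((hact γ).dist continuous_const) continuous_const

section Bounded

variable [BoundedSpace X] {act} {Ω Ω' : Set Γ} {x y : X} {a : ℝ}

lemma dist_act_le_dOmega {γ : Γ} (hγ : γ ∈ Ω) :
    dist (act x γ) (act y γ) ≤ dOmega dist act Ω x y :=
  le_csSup ⟨diam (Set.univ : Set X), by
    rintro _ ⟨γ', -, rfl⟩
    exact dist_le_diam_of_mem BoundedSpace.bounded_univ (Set.mem_univ _) (Set.mem_univ _)⟩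
    ⟨γ, hγ, rfl⟩

lemma dOmega_le_iff (ha : 0 ≤ a) :
    dOmega dist act Ω x y ≤ a ↔ ∀ γ ∈ Ω, dist (act x γ) (act y γ) ≤ a := by
  refine ⟨fun h γ hγ => (dist_act_le_dOmega hγ).trans h, fun h => Real.sSup_le ?_ ha⟩
  rintro _ ⟨γ, hγ, rfl⟩
  exact h γ hγ

lemma dOmega_le_diam : dOmega dist act Ω x y ≤ diam (Set.univ : Set X) :=
  (dOmega_le_iff diam_nonneg).2 fun _ _ =>
    dist_le_diam_of_mem BoundedSpace.bounded_univ (Set.mem_univ _) (Set.mem_univ _)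

lemma dOmega_mono (h : Ω ⊆ Ω') : dOmega dist act Ω x y ≤ dOmega dist act Ω' x y :=
  (dOmega_le_iff (Real.sSup_nonneg (by rintro _ ⟨γ, -, rfl⟩; exact dist_nonneg))).2
    fun _ hγ => dist_act_le_dOmega (h hγ)

end Bounded

variable [CompactSpace X] [PseudoMetricSpace Γ]

lemma exists_pos_forall_dist_act_le (hcont : Continuous fun q : X × Γ => act q.1 q.2)
    {K : Set Γ} (hK : IsCompact K) {ε : ℝ} (hε : 0 < ε) :
    ∃ η > 0, ∀ x y : X, dist x y ≤ η → ∀ γ ∈ K, dist (act x γ) (act y γ) ≤ ε := by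
  obtain ⟨η, hη, h⟩ := Metric.uniformContinuousOn_iff.1
    ((isCompact_univ.prod hK).uniformContinuousOn_of_continuous hcont.continuousOn) ε hε
  refine ⟨η / 2, half_pos hη, fun x y hxy γ hγ =>
    (h (x, γ) ⟨trivial, hγ⟩ (y, γ) ⟨trivial, hγ⟩ ?_).le⟩
  rw [Prod.dist_eq, dist_self, max_eq_left dist_nonneg]
  linarith

lemma widim_dOmega_le_widim_dOmega (hcont : Continuous fun q : X × Γ => act q.1 q.2)
    {Y Y' : Set X} (hYY' : Y ⊆ Y') (hY' : IsClosed Y') {Ω Ω' K : Set Γ} (hK : IsCompact K)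
    (hΩ' : Ω' ⊆ K) {ε ε' : ℝ} (hε : 0 ≤ ε) (hε' : 0 < ε')
    (h : ∀ x y, dOmega dist act Ω' x y ≤ ε' → dOmega dist act Ω x y ≤ ε) :
    widim Y (fun u v => dOmega dist act Ω u v) ε
      ≤ widim Y' (fun u v => dOmega dist act Ω' u v) ε' := by
  have := isCompact_iff_compactSpace.1 hY'.isCompact
  obtain ⟨η, hη, hmod⟩ := exists_pos_forall_dist_act_le act hcont hK hε'
  refine widim_le_widim_of_continuous (continuous_inclusion hYY') hε (fun _ _ => dOmega_le_diam)
    (fun u v => h u v) (widimSet_nonempty hε'.le hη fun u v huv => ?_)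
  exact (dOmega_le_iff hε'.le).2 fun γ hγ => hmod u v huv.le γ (hΩ' hγ)

end Dynamics

def gridSet (T : ℝ) (k : ℤ) (n : ℕ) : Set ℝ :=
  {t | ∃ m : ℕ, m < n ∧ t = (k : ℝ) * T + (m : ℝ) * T}

lemma gridSet_subset_Icc {T : ℝ} (hT : 0 ≤ T) (k : ℤ) (n : ℕ) :
    gridSet T k n ⊆ Set.Icc ((k : ℝ) * T) ((k : ℝ) * T + (n : ℝ) * T) := by
  rintro _ ⟨m, hm, rfl⟩
  have : (m : ℝ) ≤ n := by exact_mod_cast hm.le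
  constructor <;> nlinarith

lemma floor_div_mul_mem_gridSet {T : ℝ} (hT : 0 < T) {s t : ℝ} {n : ℕ}
    (ht : t ∈ Set.Icc s (s + n)) :
    (⌊t / T⌋ : ℝ) * T ∈ gridSet T ⌊s / T⌋ (⌈n / T⌉₊ + 1) := by
  have hle : ⌊s / T⌋ ≤ ⌊t / T⌋ := Int.floor_mono (by gcongr; exact ht.1)
  have hlt : ⌊t / T⌋ < ⌊s / T⌋ + ⌈(n : ℝ) / T⌉₊ + 1 := by
    have h1 : (⌊t / T⌋ : ℝ) ≤ t / T := Int.floor_le _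
    have h2 : t / T ≤ s / T + n / T := by rw [← add_div]; gcongr; exact ht.2
    have h3 : s / T < ⌊s / T⌋ + 1 := Int.lt_floor_add_one _
    have h4 : (n : ℝ) / T ≤ ⌈(n : ℝ) / T⌉₊ := Nat.le_ceil _
    exact_mod_cast (by linarith : (⌊t / T⌋ : ℝ) < ⌊s / T⌋ + ⌈(n : ℝ) / T⌉₊ + 1)
  refine ⟨(⌊t / T⌋ - ⌊s / T⌋).toNat, by omega, ?_⟩
  have : (((⌊t / T⌋ - ⌊s / T⌋).toNat : ℤ) : ℝ) = ⌊t / T⌋ - ⌊s / T⌋ := by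
    rw [Int.toNat_of_nonneg (by omega)]
    push_cast
    ring
  rw [← Int.cast_natCast, this]
  ring

lemma dist_act_le_of_dist_act_floor_le {X : Type*} [MetricSpace X] {act : X → ℝ → X}
    (hadd : ∀ x s t, act (act x s) t = act x (s + t))
    {T δ ε : ℝ} (hT : 0 < T)
    (hmod : ∀ x y : X, dist x y ≤ δ → ∀ u ∈ Set.Icc 0 T, dist (act x u) (act y u) ≤ ε)
    {x y : X} {t : ℝ} (h : dist (act x (⌊t / T⌋ * T)) (act y (⌊t / T⌋ * T)) ≤ δ) :
    dist (act x t) (act y t) ≤ ε := by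
  have hfract : Int.fract (t / T) * T ∈ Set.Icc 0 T :=
    ⟨by have := Int.fract_nonneg (t / T); positivity,
      by nlinarith [(Int.fract_lt_one (t / T)).le]⟩
  have key := hmod _ _ h _ hfract
  rwa [hadd, hadd, ← add_mul, Int.floor_add_fract, div_mul_cancel₀ _ hT.ne'] at key

lemma limsup_div_le_ofReal_mul_limsup_div {a b : ℕ → ℝ≥0∞} {N : ℕ → ℕ} {c : ℝ} (hc : 0 < c)
    (hab : ∀ n, a n ≤ b (N n)) (hN : Tendsto N atTop atTop)
    (hNc : Tendsto (fun n => (N n : ℝ) / n) atTop (𝓝 c)) :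
    limsup (fun n => a n / n) atTop ≤ ENNReal.ofReal c * limsup (fun m => b m / m) atTop := by
  have hsplit : ∀ᶠ n in atTop,
      a n / n ≤ ENNReal.ofReal ((N n : ℝ) / n) * (b (N n) / N n) := by
    filter_upwards [eventually_ne_atTop 0, hN.eventually_ne_atTop 0] with n hn hNn
    rw [ENNReal.ofReal_div_of_pos (by positivity), ENNReal.ofReal_natCast, ENNReal.ofReal_natCast,
      mul_comm, ← mul_div_assoc, ENNReal.div_mul_cancel (by exact_mod_cast hNn) (by simp)]
    exact ENNReal.div_le_div_right (hab n) _
  have hlim : limsup (fun n => ENNReal.ofReal ((N n : ℝ) / n)) atTop = ENNReal.ofReal c :=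
    (ENNReal.tendsto_ofReal hNc).limsup_eq
  calc limsup (fun n => a n / n) atTop
      ≤ limsup (fun n => ENNReal.ofReal ((N n : ℝ) / n) * (b (N n) / N n)) atTop :=
        limsup_le_limsup hsplit
    _ ≤ limsup (fun n => ENNReal.ofReal ((N n : ℝ) / n)) atTop
          * limsup (fun n => b (N n) / N n) atTop :=
        ENNReal.limsup_mul_le' (.inl (by simpa [hlim] using hc)) (.inl (by simp [hlim]))
    _ ≤ ENNReal.ofReal c * limsup (fun m => b m / m) atTop := by
        gcongr
        · exact hlim.le
        · exact (limsup_comp (fun m => b m / m) N atTop).trans_le (limsup_le_limsup_of_le hN)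

lemma tendsto_natCeil_div_add_one_div {T : ℝ} (hT : 0 < T) :
    Tendsto (fun n : ℕ => ((⌈n / T⌉₊ + 1 : ℕ) : ℝ) / n) atTop (𝓝 T⁻¹) := by
  have hceil := (tendsto_nat_ceil_mul_div_atTop (inv_nonneg.2 hT.le)).comp
    (tendsto_natCast_atTop_atTop (R := ℝ))
  simpa [Function.comp_def, add_div, div_eq_inv_mul, mul_add] using
    hceil.add tendsto_one_div_atTop_nhds_zero_nat

lemma tendsto_natCeil_mul_div {T : ℝ} (hT : 0 ≤ T) :
    Tendsto (fun n : ℕ => (⌈n * T⌉₊ : ℝ) / n) atTop (𝓝 T) := by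
  simpa [Function.comp_def, mul_comm] using (tendsto_nat_ceil_mul_div_atTop hT).comp
    (tendsto_natCast_atTop_atTop (R := ℝ))

section LocalMeanDimension

variable {X : Type*} [MetricSpace X] (act : X → ℝ → X) (T : ℝ) (p : X)

def supWidimR (r ε : ℝ) (n : ℕ) : ℝ≥0∞ :=
  ⨆ s : ℝ, (widim (dynBall act p r)
    (fun u v => dOmega dist act (Set.Icc s (s + (n : ℝ))) (u : X) (v : X)) ε : ℝ≥0∞)

def supWidimTZ (r ε : ℝ) (n : ℕ) : ℝ≥0∞ :=
  ⨆ k : ℤ, (widim (dynBall (fun x (j : ℤ) => act x (j * T)) p r)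
    (fun u v => dOmega dist act (gridSet T k n) (u : X) (v : X)) ε : ℝ≥0∞)

lemma localDimR_eq :
    localDimR act p = ⨅ r > (0 : ℝ), ⨆ ε > (0 : ℝ),
      limsup (fun n : ℕ => supWidimR act p r ε n / n) atTop := rfl

lemma localDimTZ_eq :
    localDimTZ act T p = ⨅ r > (0 : ℝ), ⨆ ε > (0 : ℝ),
      limsup (fun n : ℕ => supWidimTZ act T p r ε n / n) atTop := rfl

variable [CompactSpace X] {act T}

lemma exists_supWidimR_le_supWidimTZ (hadd : ∀ x s t, act (act x s) t = act x (s + t))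
    (hcont : Continuous fun q : X × ℝ => act q.1 q.2) (hT : 0 < T) {r ε : ℝ} (hε : 0 < ε) :
    ∃ δ > 0, ∀ n : ℕ, supWidimR act p r ε n ≤ supWidimTZ act T p r δ (⌈n / T⌉₊ + 1) := by
  obtain ⟨δ, hδ, hmod⟩ :=
    exists_pos_forall_dist_act_le act hcont (isCompact_Icc (a := 0) (b := T)) hε
  refine ⟨δ, hδ, fun n => iSup_le fun s => le_iSup_of_le ⌊s / T⌋ ?_⟩
  refine ENNReal.coe_le_coe.2 (Nat.cast_le.2 ?_)
  have hsub : dynBall act p r ⊆ dynBall (fun x (j : ℤ) => act x (j * T)) p r := fun x hx j => hx _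
  refine widim_dOmega_le_widim_dOmega act hcont hsub
    (isClosed_dynBall _ (fun _ => hcont.comp (continuous_id.prodMk continuous_const)) p r)
    isCompact_Icc (gridSet_subset_Icc hT.le _ _) hε.le hδ
    fun x y hxy => (dOmega_le_iff hε.le).2 fun t ht => ?_
  exact dist_act_le_of_dist_act_floor_le hadd hT hmod
    ((dOmega_le_iff hδ.le).1 hxy _ (floor_div_mul_mem_gridSet hT ht))

lemma supWidimTZ_le_supWidimR (hcont : Continuous fun q : X × ℝ => act q.1 q.2) (hT : 0 < T)
    {r r' ε : ℝ} (hrr' : dynBall (fun x (j : ℤ) => act x (j * T)) p r ⊆ dynBall act p r')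
    (hε : 0 < ε) (n : ℕ) :
    supWidimTZ act T p r ε n ≤ supWidimR act p r' ε ⌈n * T⌉₊ := by
  refine iSup_le fun k => le_iSup_of_le (k * T) ?_
  refine ENNReal.coe_le_coe.2 (Nat.cast_le.2 ?_)
  have hgrid : gridSet T k n ⊆ Set.Icc (k * T) (k * T + ⌈n * T⌉₊) :=
    (gridSet_subset_Icc hT.le k n).trans
      (Set.Icc_subset_Icc le_rfl (by gcongr; exact Nat.le_ceil _))
  exact widim_dOmega_le_widim_dOmega act hcont hrr'
    (isClosed_dynBall act (fun _ => hcont.comp (continuous_id.prodMk continuous_const)) p r')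
    isCompact_Icc subset_rfl hε.le hε fun x y hxy => (dOmega_mono hgrid).trans hxy

end LocalMeanDimension

section Comparison

variable {X : Type*} [MetricSpace X] [CompactSpace X] {act : X → ℝ → X} {T : ℝ}

lemma exists_dynBall_int_subset_dynBall (hadd : ∀ x s t, act (act x s) t = act x (s + t))
    (hcont : Continuous fun q : X × ℝ => act q.1 q.2) (hT : 0 < T) (p : X)
    {r' : ℝ} (hr' : 0 < r') :
    ∃ r > 0, dynBall (fun x (j : ℤ) => act x (j * T)) p r ⊆ dynBall act p r' := by
  obtain ⟨r, hr, hmod⟩ :=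
    exists_pos_forall_dist_act_le act hcont (isCompact_Icc (a := 0) (b := T)) hr'
  exact ⟨r, hr, fun x hx t => dist_act_le_of_dist_act_floor_le hadd hT hmod (hx ⌊t / T⌋)⟩

lemma ofReal_mul_localDimR_le_localDimTZ (hadd : ∀ x s t, act (act x s) t = act x (s + t))
    (hcont : Continuous fun q : X × ℝ => act q.1 q.2) (hT : 0 < T) (p : X) :
    ENNReal.ofReal T * localDimR act p ≤ localDimTZ act T p := by
  rw [localDimR_eq, localDimTZ_eq]
  refine le_iInf₂ fun r hr => (mul_le_mul_right (iInf₂_le r hr) _).trans ?_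
  simp only [ENNReal.mul_iSup]
  refine iSup₂_le fun ε hε => ?_
  obtain ⟨δ, hδ, hle⟩ := exists_supWidimR_le_supWidimTZ p hadd hcont hT (r := r) hε
  refine le_iSup₂_of_le δ hδ ?_
  calc ENNReal.ofReal T * limsup (fun n : ℕ => supWidimR act p r ε n / n) atTop
      ≤ ENNReal.ofReal T * (ENNReal.ofReal T⁻¹
          * limsup (fun n : ℕ => supWidimTZ act T p r δ n / n) atTop) := by
        gcongr
        refine limsup_div_le_ofReal_mul_limsup_div (inv_pos.2 hT) hle ?_
          (tendsto_natCeil_div_add_one_div hT)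
        exact tendsto_atTop_mono (fun n => Nat.le_succ _)
          (tendsto_nat_ceil_atTop.comp (tendsto_natCast_atTop_atTop.atTop_div_const hT))
    _ = limsup (fun n : ℕ => supWidimTZ act T p r δ n / n) atTop := by
        rw [← mul_assoc, ← ENNReal.ofReal_mul hT.le, mul_inv_cancel₀ hT.ne', ENNReal.ofReal_one,
          one_mul]

lemma localDimTZ_le_ofReal_mul_localDimR (hadd : ∀ x s t, act (act x s) t = act x (s + t))
    (hcont : Continuous fun q : X × ℝ => act q.1 q.2) (hT : 0 < T) (p : X) :
    localDimTZ act T p ≤ ENNReal.ofReal T * localDimR act p := by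
  have hT₀ : ENNReal.ofReal T ≠ 0 := by simpa using hT
  rw [localDimR_eq, localDimTZ_eq]
  simp only [ENNReal.mul_iInf_of_ne hT₀ ENNReal.ofReal_ne_top, ENNReal.mul_iSup]
  refine le_iInf₂ fun r' hr' => ?_
  obtain ⟨r, hr, hsub⟩ := exists_dynBall_int_subset_dynBall hadd hcont hT p hr'
  refine (iInf₂_le r hr).trans (iSup₂_mono fun ε hε => ?_)
  refine limsup_div_le_ofReal_mul_limsup_div hT
    (supWidimTZ_le_supWidimR p hcont hT hsub hε) ?_ (tendsto_natCeil_mul_div hT.le)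
  exact tendsto_nat_ceil_atTop.comp (tendsto_natCast_atTop_atTop.atTop_mul_const hT)

end Comparison

theorem stmt6_general {X : Type*} [MetricSpace X] [CompactSpace X]
    (act : X → ℝ → X)
    (hadd : ∀ x s t, act (act x s) t = act x (s + t))
    (hcont : Continuous fun p : X × ℝ => act p.1 p.2)
    (T : ℝ) (hT : 0 < T) (p : X) :
    localDimTZ act T p = ENNReal.ofReal T * localDimR act p :=
  (localDimTZ_le_ofReal_mul_localDimR hadd hcont hT p).antisymm
    (ofReal_mul_localDimR_le_localDimTZ hadd hcont hT p)

/-- For a continuous `ℝ`-action on a compact metric space and any point `p`,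
`dim_p(X : Tℤ) = T · dim_p(X : ℝ)`. -/
theorem stmt6 {X : Type*} [MetricSpace X] [CompactSpace X]
    (act : X → ℝ → X) (h0 : ∀ x, act x 0 = x)
    (hadd : ∀ x s t, act (act x s) t = act x (s + t))
    (hcont : Continuous fun p : X × ℝ => act p.1 p.2)
    (T : ℝ) (hT : 0 < T) (p : X) :
    localDimTZ act T p = ENNReal.ofReal T * localDimR act p :=
  stmt6_general act hadd hcont T hT p
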